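/- arXiv:2502.18892 — 6 statements merged into one kernel-verified Lean document; each statement's English description precedes it below -/
import Mathlib

section
/- Let d be a positive integer, z₁, z₂ ∈ ℍ, and let g₁, g₂ be invertible real 2×2 matrices with det g₁ = det g₂ > 0. Writing g = [[α,β],[γ,δ]], g·z := (αz+β)/(γz+δ) and j(g,z) := γz+δ, one has the identity of 2×2 complex matrices g₁ · w_d(z₁,z₂) · g₂⁻¹ = (j(g₁,z₁)·j(g₂,z₂)/det g₁) · w_d(g₁·z₁, g₂·z₂). (Equivariance formula (2.8) in Proposition 2.1 of the paper.) -/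
open Matrix Complex

/-- The matrix `w_d(z₁,z₂) = (1/d)·[[z₁, −z₁z₂],[1, −z₂]]`. -/
noncomputable def wMat (d : ℕ) (z₁ z₂ : ℂ) : Matrix (Fin 2) (Fin 2) ℂ :=
  ((d : ℂ))⁻¹ • !![z₁, -z₁ * z₂; 1, -z₂]

/-- Möbius action of a real 2×2 matrix on a complex number. -/
noncomputable def moebius (g : Matrix (Fin 2) (Fin 2) ℝ) (z : ℂ) : ℂ :=
  ((g 0 0 : ℂ) * z + (g 0 1 : ℂ)) / ((g 1 0 : ℂ) * z + (g 1 1 : ℂ))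

/-- The automorphy factor `j(g,z) = γz + δ`. -/
noncomputable def autFactor (g : Matrix (Fin 2) (Fin 2) ℝ) (z : ℂ) : ℂ :=
  (g 1 0 : ℂ) * z + (g 1 1 : ℂ)



lemma jne (g : Matrix (Fin 2) (Fin 2) ℝ) (z : ℂ) (hz : 0 < z.im) (hg : g.det ≠ 0) :
    (g 1 0 : ℂ) * z + (g 1 1 : ℂ) ≠ 0 := by
  rcases eq_or_ne (g 1 0) 0 with h | h
  · simp only [h, ofReal_zero, zero_mul, zero_add, ne_eq, ofReal_eq_zero]
    intro h1
    apply hg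
    rw [Matrix.det_fin_two, h, h1]; ring
  · intro hc
    have : ((g 1 0 : ℂ) * z + (g 1 1 : ℂ)).im = 0 := by rw [hc]; simp
    simp only [Complex.add_im, Complex.mul_im, Complex.ofReal_re, Complex.ofReal_im,
      zero_mul, add_zero] at this
    exact h (by nlinarith [hz])

lemma inv2 (g : Matrix (Fin 2) (Fin 2) ℝ) :
    (g.map Complex.ofReal)⁻¹ =
      (g.det : ℂ)⁻¹ • !![(g 1 1 : ℂ), -(g 0 1 : ℂ); -(g 1 0 : ℂ), (g 0 0 : ℂ)] := by
  rw [Matrix.inv_def, Matrix.adjugate_fin_two]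
  have hdet : (g.map Complex.ofReal).det = (g.det : ℂ) := by
    simp [Matrix.det_fin_two, Matrix.map_apply]
  rw [hdet, Ring.inverse_eq_inv']
  congr 1


/-- Equivariance formula (2.8) of Proposition 2.1:
`g₁ · w_d(z₁,z₂) · g₂⁻¹ = (j(g₁,z₁)j(g₂,z₂)/det g₁) · w_d(g₁z₁, g₂z₂)`. -/
theorem stmt_0 (d : ℕ) (hd : 0 < d) (z₁ z₂ : ℂ) (hz₁ : 0 < z₁.im) (hz₂ : 0 < z₂.im)
    (g₁ g₂ : Matrix (Fin 2) (Fin 2) ℝ)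
    (hdet : g₁.det = g₂.det) (hpos : 0 < g₁.det) :
    g₁.map Complex.ofReal * wMat d z₁ z₂ * (g₂.map Complex.ofReal)⁻¹ =
      (autFactor g₁ z₁ * autFactor g₂ z₂ / (g₁.det : ℂ)) •
        wMat d (moebius g₁ z₁) (moebius g₂ z₂) := by
  have hd1 : g₁.det ≠ 0 := hpos.ne'
  have hd2 : g₂.det ≠ 0 := hdet ▸ hd1
  have hj1 := jne g₁ z₁ hz₁ hd1
  have hj2 := jne g₂ z₂ hz₂ hd2
  have hdc : (d : ℂ) ≠ 0 := Nat.cast_ne_zero.mpr hd.ne'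
  have hd1c : (g₁.det : ℂ) ≠ 0 := ofReal_ne_zero.mpr hd1
  set N₁ : ℂ := (g₁ 0 0 : ℂ) * z₁ + (g₁ 0 1 : ℂ) with hN1
  set N₂ : ℂ := (g₂ 0 0 : ℂ) * z₂ + (g₂ 0 1 : ℂ) with hN2
  set J₁ : ℂ := (g₁ 1 0 : ℂ) * z₁ + (g₁ 1 1 : ℂ) with hJ1
  set J₂ : ℂ := (g₂ 1 0 : ℂ) * z₂ + (g₂ 1 1 : ℂ) with hJ2
  have key : g₁.map Complex.ofReal * !![z₁, -z₁ * z₂; 1, -z₂] *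
      !![(g₂ 1 1 : ℂ), -(g₂ 0 1 : ℂ); -(g₂ 1 0 : ℂ), (g₂ 0 0 : ℂ)] =
      !![N₁ * J₂, -(N₁ * N₂); J₁ * J₂, -(J₁ * N₂)] := by
    ext i j
    fin_cases i <;> fin_cases j <;>
      · simp [Matrix.mul_apply, Fin.sum_univ_two, Matrix.map_apply, hN1, hN2, hJ1, hJ2]
        ring
  rw [inv2, ← hdet]
  unfold wMat
  simp only [Matrix.mul_smul, Matrix.smul_mul]
  rw [key]
  have hm1 : moebius g₁ z₁ = N₁ / J₁ := rfl
  have hm2 : moebius g₂ z₂ = N₂ / J₂ := rfl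
  have haf1 : autFactor g₁ z₁ = J₁ := rfl
  have haf2 : autFactor g₂ z₂ = J₂ := rfl
  rw [hm1, hm2, haf1, haf2]
  ext i j
  fin_cases i <;> fin_cases j <;>
    · simp only [Matrix.smul_apply, Matrix.cons_val', Matrix.cons_val_zero,
        Matrix.cons_val_one, Matrix.head_cons, Matrix.empty_val',
        Matrix.cons_val_fin_one, smul_eq_mul, Fin.isValue, Fin.mk_zero, Fin.mk_one,
        Matrix.of_apply]
      field_simp
      try ring
end

section
/- Let d be a positive integer and z₁, z₂ ∈ ℍ. Then the matrices Re w_d(z₁,z₂) and Im w_d(z₁,z₂) (entrywise real and imaginary parts) are linearly independent over ℝ in the space of real 2×2 matrices, and for every (α,β) ∈ ℝ² with (α,β) ≠ (0,0) one has d·det(α·Re w_d(z₁,z₂) + β·Im w_d(z₁,z₂)) < 0; moreover, with w̃ := w_d(z₁, z̄₂), one has d·det(α·Re w̃ + β·Im w̃) > 0 for all (α,β) ≠ (0,0). (Thus the plane spanned by Re w_d, Im w_d is a negative definite 2-plane for the form Q_d = d·det, and the plane spanned by Re w̃, Im w̃ is positive definite; this is the content of Proposition 2.1.) -/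
/-!
On the span of `Re w_d(z₁,w)` and `Im w_d(z₁,w)` the form `d·det` is
`-(α² + β²)·Im z₁·Im w / d`, so its sign is that of `-Im z₁·Im w`; replacing `z₂` by `z̄₂`
flips the sign of `Im w`.
-/

open Matrix Complex

lemma sq_add_sq_pos_of_not_and {α β : ℝ} (h : ¬(α = 0 ∧ β = 0)) : 0 < α ^ 2 + β ^ 2 := by
  have hne : α ^ 2 + β ^ 2 ≠ 0 := by rwa [sq, sq, Ne, mul_self_add_mul_self_eq_zero]
  exact lt_of_le_of_ne (by positivity) hne.symm

lemma natCast_mul_det_smul_re_add_smul_im_wMat (d : ℕ) (z₁ w : ℂ) (α β : ℝ) :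
    (d : ℝ) * (α • (wMat d z₁ w).map re + β • (wMat d z₁ w).map im).det
      = -((α ^ 2 + β ^ 2) * z₁.im * w.im) / d := by
  rcases eq_or_ne d 0 with rfl | hd
  · simp
  have hd' : (d : ℝ) ≠ 0 := Nat.cast_ne_zero.mpr hd
  simp [wMat, det_fin_two, mul_re, mul_im, inv_re, inv_im, normSq_natCast]
  field_simp
  ring

lemma natCast_mul_det_smul_re_add_smul_im_wMat_neg {d : ℕ} (hd : 0 < d) {z₁ w : ℂ}
    (hz₁ : 0 < z₁.im) (hw : 0 < w.im) {α β : ℝ} (hαβ : ¬(α = 0 ∧ β = 0)) :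
    (d : ℝ) * (α • (wMat d z₁ w).map re + β • (wMat d z₁ w).map im).det < 0 := by
  rw [natCast_mul_det_smul_re_add_smul_im_wMat, neg_div, neg_lt_zero]
  have := sq_add_sq_pos_of_not_and hαβ
  positivity

lemma natCast_mul_det_smul_re_add_smul_im_wMat_pos {d : ℕ} (hd : 0 < d) {z₁ w : ℂ}
    (hz₁ : 0 < z₁.im) (hw : w.im < 0) {α β : ℝ} (hαβ : ¬(α = 0 ∧ β = 0)) :
    0 < (d : ℝ) * (α • (wMat d z₁ w).map re + β • (wMat d z₁ w).map im).det := by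
  rw [natCast_mul_det_smul_re_add_smul_im_wMat, ← mul_neg]
  have := sq_add_sq_pos_of_not_and hαβ
  exact div_pos (mul_pos (mul_pos this hz₁) (neg_pos.mpr hw)) (Nat.cast_pos.mpr hd)

/-- Proposition 2.1: `Re w_d(z₁,z₂)` and `Im w_d(z₁,z₂)` are linearly independent and span a
negative definite 2-plane for the quadratic form `Q_d = d·det`, while the real and imaginary
parts of `w̃ = w_d(z₁, z̄₂)` span a positive definite 2-plane. -/
theorem stmt_1 (d : ℕ) (hd : 0 < d) (z₁ z₂ : ℂ) (hz₁ : 0 < z₁.im) (hz₂ : 0 < z₂.im) :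
    LinearIndependent ℝ
      ![(wMat d z₁ z₂).map Complex.re, (wMat d z₁ z₂).map Complex.im] ∧
    (∀ α β : ℝ, ¬(α = 0 ∧ β = 0) →
      (d : ℝ) *
        (α • (wMat d z₁ z₂).map Complex.re + β • (wMat d z₁ z₂).map Complex.im).det < 0) ∧
    (∀ α β : ℝ, ¬(α = 0 ∧ β = 0) →
      0 < (d : ℝ) *
        (α • (wMat d z₁ (starRingEnd ℂ z₂)).map Complex.re
          + β • (wMat d z₁ (starRingEnd ℂ z₂)).map Complex.im).det) := by
  have hneg := fun α β (hαβ : ¬(α = 0 ∧ β = 0)) ↦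
    natCast_mul_det_smul_re_add_smul_im_wMat_neg hd hz₁ hz₂ hαβ
  refine ⟨?_, hneg, fun α β ↦
    natCast_mul_det_smul_re_add_smul_im_wMat_pos hd hz₁ (by simpa using hz₂)⟩
  -- a vanishing combination has determinant `0`, which negative definiteness forbids
  rw [LinearIndependent.pair_iff]
  intro α β hαβ
  by_contra h
  simpa [hαβ] using hneg α β h
end

section
/- In the small CM setup, for all r, λ, λ̃ ∈ ℚ(√D₀) one has r·w = ι_{z₁}(r)·w, r·w̃ = ι_{z₁}(r)·w̃, and consequently i_d(r·λ̃, r·λ) = ι_{z₁}(r) · i_d(λ̃, λ) as 2×2 complex matrices. (Lemma 2.5 of the paper.) -/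
open Matrix Complex ComplexConjugate

/-- `√D₀ := i·√|D₀|`. -/
noncomputable def sd (D₀ : ℤ) : ℂ := Complex.I * Real.sqrt (D₀.natAbs)

/-- Entrywise complex conjugation of a matrix. -/
noncomputable def matConj (m : Matrix (Fin 2) (Fin 2) ℂ) : Matrix (Fin 2) (Fin 2) ℂ :=
  m.map (starRingEnd ℂ)

/-- `i_d^+(λ) := −(d/√D₀)·(λ·w̃ − conj(λ·w̃))`. -/
noncomputable def iPlus (D₀ : ℤ) (d : ℕ) (z₁ z₂ : ℂ) (lam : ℂ) : Matrix (Fin 2) (Fin 2) ℂ :=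
  (-(d : ℂ) / sd D₀) •
    (lam • wMat d z₁ (starRingEnd ℂ z₂) - matConj (lam • wMat d z₁ (starRingEnd ℂ z₂)))

/-- `i_d^−(λ) := −(d/√D₀)·(λ·w − conj(λ·w))`. -/
noncomputable def iMinus (D₀ : ℤ) (d : ℕ) (z₁ z₂ : ℂ) (lam : ℂ) : Matrix (Fin 2) (Fin 2) ℂ :=
  (-(d : ℂ) / sd D₀) • (lam • wMat d z₁ z₂ - matConj (lam • wMat d z₁ z₂))

/-!
The matrix `w_d(z₁, s) = d⁻¹ · (z₁, 1)ᵗ (1, −s)` has rank one, and its columns are multiples of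
`(z₁, 1)ᵗ`, an eigenvector of `ι_{z₁}(r)` with eigenvalue `r`; hence `ι_{z₁}(r) · w = r · w` for
every `s`, in particular for `w` and `w̃`. Since `ι_{z₁}(r)` is real, left multiplication by it
commutes with entrywise conjugation, so it carries `λw − conj(λw)` to `rλw − conj(rλw)`, which
makes both `i_d^±` equivariant.
-/

lemma wMat_eq_smul_vecMulVec (d : ℕ) (z s : ℂ) :
    wMat d z s = (d : ℂ)⁻¹ • vecMulVec ![z, 1] ![1, -s] := by
  unfold wMat
  congr 1
  ext i j
  fin_cases i <;> fin_cases j <;> simp [vecMulVec]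

lemma mul_wMat_of_mulVec_eq_smul {M : Matrix (Fin 2) (Fin 2) ℂ} {z r : ℂ}
    (hM : M *ᵥ ![z, 1] = r • ![z, 1]) (d : ℕ) (s : ℂ) :
    M * wMat d z s = r • wMat d z s := by
  rw [wMat_eq_smul_vecMulVec, Matrix.mul_smul, mul_vecMulVec, hM, smul_vecMulVec, smul_comm]

lemma map_ofReal_mul_matConj (A : Matrix (Fin 2) (Fin 2) ℝ) (N : Matrix (Fin 2) (Fin 2) ℂ) :
    A.map ofReal * matConj N = matConj (A.map ofReal * N) := by
  simp [matConj, Matrix.map_map, Function.comp_def]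

lemma map_ofReal_mul_sub_matConj (A : Matrix (Fin 2) (Fin 2) ℝ)
    {X Y : Matrix (Fin 2) (Fin 2) ℂ} (h : A.map ofReal * X = Y) :
    A.map ofReal * (X - matConj X) = Y - matConj Y := by
  rw [Matrix.mul_sub, map_ofReal_mul_matConj, h]

section Equivariance

variable {A : Matrix (Fin 2) (Fin 2) ℝ} {z₁ r : ℂ}

lemma map_ofReal_mul_smul_wMat (hA : A.map ofReal *ᵥ ![z₁, 1] = r • ![z₁, 1]) (d : ℕ)
    (s lam : ℂ) : A.map ofReal * (lam • wMat d z₁ s) = (r * lam) • wMat d z₁ s := by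
  rw [Matrix.mul_smul, mul_wMat_of_mulVec_eq_smul hA, smul_smul, mul_comm]

lemma iPlus_mul (hA : A.map ofReal *ᵥ ![z₁, 1] = r • ![z₁, 1]) (D₀ : ℤ) (d : ℕ) (z₂ lam : ℂ) :
    iPlus D₀ d z₁ z₂ (r * lam) = A.map ofReal * iPlus D₀ d z₁ z₂ lam := by
  unfold iPlus
  rw [Matrix.mul_smul, map_ofReal_mul_sub_matConj A (map_ofReal_mul_smul_wMat hA d _ lam)]

lemma iMinus_mul (hA : A.map ofReal *ᵥ ![z₁, 1] = r • ![z₁, 1]) (D₀ : ℤ) (d : ℕ) (z₂ lam : ℂ) :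
    iMinus D₀ d z₁ z₂ (r * lam) = A.map ofReal * iMinus D₀ d z₁ z₂ lam := by
  unfold iMinus
  rw [Matrix.mul_smul, map_ofReal_mul_sub_matConj A (map_ofReal_mul_smul_wMat hA d _ lam)]

end Equivariance

theorem stmt_5_general (D₀ : ℤ) (d : ℕ) (z₁ z₂ : ℂ) (r : ℂ)
    (A : Matrix (Fin 2) (Fin 2) ℝ)
    (hA1 : (A.map Complex.ofReal).mulVec ![z₁, 1] = r • ![z₁, 1]) :
    (r • wMat d z₁ z₂ = A.map Complex.ofReal * wMat d z₁ z₂) ∧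
    (r • wMat d z₁ (conj z₂) = A.map Complex.ofReal * wMat d z₁ (conj z₂)) ∧
    (∀ u v u' v' : ℚ,
      iPlus D₀ d z₁ z₂ (r * ((u : ℂ) + (v : ℂ) * sd D₀)) +
        iMinus D₀ d z₁ z₂ (r * ((u' : ℂ) + (v' : ℂ) * sd D₀)) =
      A.map Complex.ofReal *
        (iPlus D₀ d z₁ z₂ ((u : ℂ) + (v : ℂ) * sd D₀) +
          iMinus D₀ d z₁ z₂ ((u' : ℂ) + (v' : ℂ) * sd D₀))) := by
  have hW := mul_wMat_of_mulVec_eq_smul hA1 d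
  refine ⟨(hW z₂).symm, (hW (conj z₂)).symm, fun u v u' v' => ?_⟩
  rw [iPlus_mul hA1, iMinus_mul hA1, Matrix.mul_add]

/-- Lemma 2.5 of the paper: for `r ∈ ℚ(√D₀)` one has `r·w = ι_{z₁}(r)·w`,
`r·w̃ = ι_{z₁}(r)·w̃`, and `i_d(rλ̃, rλ) = ι_{z₁}(r)·i_d(λ̃,λ)`, where `ι_{z₁}(r)` is
the unique real matrix `A` with `A·(z₁,1)ᵗ = r(z₁,1)ᵗ` and `A·(z̄₁,1)ᵗ = r̄(z̄₁,1)ᵗ`. -/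
theorem stmt_5 (D₀ : ℤ) (hD₀ : D₀ < 0) (t₁ t₂ a₁ a₂ d : ℕ)
    (ht₁ : 0 < t₁) (ht₂ : 0 < t₂) (ha₁ : 0 < a₁) (ha₂ : 0 < a₂) (hd : 0 < d)
    (b₁ b₂ : ℤ) (z₁ z₂ : ℂ)
    (hz₁ : z₁ = ((b₁ : ℂ) + (t₁ : ℂ) * sd D₀) / (2 * (a₁ : ℂ)))
    (hz₂ : z₂ = ((b₂ : ℂ) + (t₂ : ℂ) * sd D₀) / (2 * (a₂ : ℂ)))
    (r : ℂ) (x y : ℚ) (hr : r = (x : ℂ) + (y : ℂ) * sd D₀)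
    (A : Matrix (Fin 2) (Fin 2) ℝ)
    (hA1 : (A.map Complex.ofReal).mulVec ![z₁, 1] = r • ![z₁, 1])
    (hA2 : (A.map Complex.ofReal).mulVec ![conj z₁, 1] = conj r • ![conj z₁, 1]) :
    (r • wMat d z₁ z₂ = A.map Complex.ofReal * wMat d z₁ z₂) ∧
    (r • wMat d z₁ (conj z₂) = A.map Complex.ofReal * wMat d z₁ (conj z₂)) ∧
    (∀ u v u' v' : ℚ,
      iPlus D₀ d z₁ z₂ (r * ((u : ℂ) + (v : ℂ) * sd D₀)) +
        iMinus D₀ d z₁ z₂ (r * ((u' : ℂ) + (v' : ℂ) * sd D₀)) =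
      A.map Complex.ofReal *
        (iPlus D₀ d z₁ z₂ ((u : ℂ) + (v : ℂ) * sd D₀) +
          iMinus D₀ d z₁ z₂ ((u' : ℂ) + (v' : ℂ) * sd D₀))) :=
  stmt_5_general D₀ d z₁ z₂ r A hA1
end

section
/- Let D₀, t₁, t₂, a₁, a₂, b be integers with D₀ ≡ 1 (mod 8), gcd(a_i, 6) = 1, 48 ∣ a_i − t_i, 48 ∣ b − 1, and 4a_i ∣ b² − D₀ for i = 1,2. Put D_i := D₀t_i², b_i := b·t_i and c_i := (b_i² − D_i)/(4a_i) ∈ ℤ. Then 8 ∣ D_i − 1 for i = 1, 2, and 3(D₁ − 1) + b₁(a₁ − c₁ + a₁²c₁) ≡ 3(D₂ − 1) + b₂(a₂ − c₂ + a₂²c₂) (mod 48); equivalently, ε_{D₁}·ζ₄₈^{b₁(a₁−c₁+a₁²c₁)} = ε_{D₂}·ζ₄₈^{b₂(a₂−c₂+a₂²c₂)} as complex numbers, where ε_D := (−1)^{(D−1)/8} and ζ₄₈ := e^{2πi/48}. (This is the computational content of Lemma 2.8 of the paper, which asserts 𝔣₂(z₁)/𝔣₂(z₂) = f(𝔞₁)/f(𝔞₂)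 for the corresponding class invariants.) -/
/-- The computational content of Lemma 2.8 of the paper: under the stated congruence
conditions, `8 ∣ Dᵢ − 1` and the quantity `3(Dᵢ−1) + bᵢ(aᵢ − cᵢ + aᵢ²cᵢ)` mod 48 is
independent of `i = 1,2`; equivalently
`ε_{D₁}·ζ₄₈^{b₁(a₁−c₁+a₁²c₁)} = ε_{D₂}·ζ₄₈^{b₂(a₂−c₂+a₂²c₂)}`. -/
theorem stmt_8 (D₀ t₁ t₂ a₁ a₂ b : ℤ)
    (h8 : D₀ % 8 = 1)
    (hg1 : Int.gcd a₁ 6 = 1) (hg2 : Int.gcd a₂ 6 = 1)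
    (hat1 : (48 : ℤ) ∣ a₁ - t₁) (hat2 : (48 : ℤ) ∣ a₂ - t₂)
    (hb : (48 : ℤ) ∣ b - 1)
    (hc1 : (4 * a₁) ∣ b ^ 2 - D₀) (hc2 : (4 * a₂) ∣ b ^ 2 - D₀) :
    let D₁ := D₀ * t₁ ^ 2
    let D₂ := D₀ * t₂ ^ 2
    let b₁ := b * t₁
    let b₂ := b * t₂
    let c₁ := (b₁ ^ 2 - D₁) / (4 * a₁)
    let c₂ := (b₂ ^ 2 - D₂) / (4 * a₂)
    let ζ := Complex.exp (2 * Real.pi * Complex.I / 48)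
    ((8 : ℤ) ∣ D₁ - 1) ∧ ((8 : ℤ) ∣ D₂ - 1) ∧
    ((48 : ℤ) ∣ (3 * (D₁ - 1) + b₁ * (a₁ - c₁ + a₁ ^ 2 * c₁)) -
      (3 * (D₂ - 1) + b₂ * (a₂ - c₂ + a₂ ^ 2 * c₂))) ∧
    ((-1 : ℂ) ^ ((D₁ - 1) / 8) * ζ ^ (b₁ * (a₁ - c₁ + a₁ ^ 2 * c₁)) =
      (-1 : ℂ) ^ ((D₂ - 1) / 8) * ζ ^ (b₂ * (a₂ - c₂ + a₂ ^ 2 * c₂))) := by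
  intro D₁ D₂ b₁ b₂ c₁ c₂ ζ
  obtain ⟨k₁, hk₁⟩ := hc1
  obtain ⟨k₂, hk₂⟩ := hc2
  have ha₁0 : a₁ ≠ 0 := by rintro rfl; simp [Int.gcd] at hg1
  have ha₂0 : a₂ ≠ 0 := by rintro rfl; simp [Int.gcd] at hg2
  -- oddness from gcd condition
  have hodd : ∀ a : ℤ, Int.gcd a 6 = 1 → a % 2 = 1 := by
    intro a ha
    rcases Int.emod_two_eq a with h | h
    · exfalso
      have h2 : (2:ℤ) ∣ a := Int.dvd_of_emod_eq_zero h
      have h6 : (2:ℤ) ∣ (Int.gcd a 6 : ℤ) := Int.dvd_coe_gcd h2 (by norm_num)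
      rw [ha] at h6; norm_num at h6
    · exact h
  -- 8 ∣ t² - 1 for odd t
  have h8sq : ∀ t : ℤ, t % 2 = 1 → (8:ℤ) ∣ t ^ 2 - 1 := by
    intro t ht
    obtain ⟨w, rfl⟩ : ∃ w, t = 2 * w + 1 := ⟨t / 2, by omega⟩
    rcases Int.even_or_odd w with ⟨n, rfl⟩ | ⟨n, rfl⟩
    · exact ⟨2 * n ^ 2 + n, by ring⟩
    · exact ⟨2 * n ^ 2 + 3 * n + 1, by ring⟩
  -- 24 ∣ a² - 1 for gcd(a,6)=1
  have h24 : ∀ a : ℤ, Int.gcd a 6 = 1 → (24:ℤ) ∣ a ^ 2 - 1 := by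
    intro a ha
    have h2 : a % 2 = 1 := hodd a ha
    have h3 : ¬ (3:ℤ) ∣ a := by
      intro h3
      have h6 : (3:ℤ) ∣ (Int.gcd a 6 : ℤ) := Int.dvd_coe_gcd h3 (by norm_num)
      rw [ha] at h6; norm_num at h6
    have h8' : (8:ℤ) ∣ a ^ 2 - 1 := h8sq a h2
    have h3' : (3:ℤ) ∣ a ^ 2 - 1 := by
      have hmod : a % 3 = 1 ∨ a % 3 = 2 := by omega
      obtain ⟨q, hq⟩ : ∃ q, a = 3 * q + a % 3 := ⟨a / 3, by omega⟩
      rcases hmod with h | h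
      · rw [h] at hq; exact ⟨3 * q ^ 2 + 2 * q, by rw [hq]; ring⟩
      · rw [h] at hq; exact ⟨3 * q ^ 2 + 4 * q + 1, by rw [hq]; ring⟩
    exact (by omega : ∀ x : ℤ, (8:ℤ) ∣ x → (3:ℤ) ∣ x → (24:ℤ) ∣ x) _ h8' h3'
  obtain ⟨u, hu⟩ : ∃ u, b = 48 * u + 1 := ⟨(b - 1) / 48, by obtain ⟨u, hu⟩ := hb; omega⟩
  obtain ⟨d, hd⟩ : ∃ d, D₀ = 8 * d + 1 := ⟨(D₀ - 1) / 8, by omega⟩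
  -- k is even
  have hkeven : ∀ a k : ℤ, a % 2 = 1 → b ^ 2 - D₀ = 4 * a * k → ∃ j, k = 2 * j := by
    intro a k ha hk
    have h8' : 4 * (a * k) = 4 * (2 * (288 * u ^ 2 + 12 * u - d)) := by
      rw [← mul_assoc, ← hk, hu, hd]; ring
    have hak : a * k = 2 * (288 * u ^ 2 + 12 * u - d) :=
      mul_left_cancel₀ (by norm_num : (4:ℤ) ≠ 0) h8'
    have h2ak : (2:ℤ) ∣ a * k := ⟨_, hak⟩
    rcases Int.prime_two.2.2 a k h2ak with h | h
    · exfalso; omega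
    · exact ⟨k / 2, by omega⟩
  -- key congruence
  have key : ∀ t a k : ℤ, Int.gcd a 6 = 1 → (48:ℤ) ∣ a - t → b ^ 2 - D₀ = 4 * a * k →
      3 * (D₀ * t ^ 2 - 1) + b * t * (a - t ^ 2 * k + a ^ 2 * (t ^ 2 * k)) ≡
        3 * D₀ - 2 [ZMOD 48] := by
    intro t a k hg hat hk
    obtain ⟨m, hm⟩ := h24 a hg
    obtain ⟨j, hj⟩ := hkeven a k (hodd a hg) hk
    have ht : t ≡ a [ZMOD 48] := Int.modEq_iff_dvd.mpr hat
    have hb1 : b ≡ 1 [ZMOD 48] := (Int.modEq_iff_dvd.mpr hb).symm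
    have ht2 : t ^ 2 ≡ a ^ 2 [ZMOD 48] := ht.pow 2
    have h2k : t ^ 2 * k ≡ a ^ 2 * k [ZMOD 48] := ht2.mul_right k
    have e1 : 3 * (D₀ * t ^ 2 - 1) + b * t * (a - t ^ 2 * k + a ^ 2 * (t ^ 2 * k)) ≡
        3 * (D₀ * a ^ 2 - 1) + 1 * a * (a - a ^ 2 * k + a ^ 2 * (a ^ 2 * k)) [ZMOD 48] :=
      (((ht2.mul_left D₀).sub_right 1).mul_left 3).add
        ((hb1.mul ht).mul (((Int.ModEq.refl a).sub h2k).add (h2k.mul_left (a ^ 2))))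
    refine e1.trans ?_
    have hX : 3 * (D₀ * a ^ 2 - 1) + 1 * a * (a - a ^ 2 * k + a ^ 2 * (a ^ 2 * k)) -
        (3 * D₀ - 2) = 48 * (m * (12 * d + 2 + a ^ 3 * j)) := by
      have h1 : 3 * (D₀ * a ^ 2 - 1) + 1 * a * (a - a ^ 2 * k + a ^ 2 * (a ^ 2 * k)) -
          (3 * D₀ - 2) = (a ^ 2 - 1) * (3 * D₀ + 1 + a ^ 3 * k) := by ring
      rw [h1, hm, hd, hj]; ring
    exact (Int.modEq_iff_dvd.mpr ⟨m * (12 * d + 2 + a ^ 3 * j), by linear_combination hX⟩).symm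
  -- values of c₁, c₂
  have hc1v : c₁ = t₁ ^ 2 * k₁ := by
    show ((b * t₁) ^ 2 - D₀ * t₁ ^ 2) / (4 * a₁) = t₁ ^ 2 * k₁
    rw [show (b * t₁) ^ 2 - D₀ * t₁ ^ 2 = (4 * a₁) * (t₁ ^ 2 * k₁) by
      linear_combination t₁ ^ 2 * hk₁]
    exact Int.mul_ediv_cancel_left _ (mul_ne_zero (by norm_num) ha₁0)
  have hc2v : c₂ = t₂ ^ 2 * k₂ := by
    show ((b * t₂) ^ 2 - D₀ * t₂ ^ 2) / (4 * a₂) = t₂ ^ 2 * k₂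
    rw [show (b * t₂) ^ 2 - D₀ * t₂ ^ 2 = (4 * a₂) * (t₂ ^ 2 * k₂) by
      linear_combination t₂ ^ 2 * hk₂]
    exact Int.mul_ediv_cancel_left _ (mul_ne_zero (by norm_num) ha₂0)
  -- 8 ∣ Dᵢ - 1
  have ht1odd : t₁ % 2 = 1 := by have := hodd a₁ hg1; omega
  have ht2odd : t₂ % 2 = 1 := by have := hodd a₂ hg2; omega
  have hD1 : (8:ℤ) ∣ D₁ - 1 := by
    obtain ⟨x, hx⟩ := h8sq t₁ ht1odd
    exact ⟨d * t₁ ^ 2 + x, by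
      rw [show D₁ = D₀ * t₁ ^ 2 from rfl, hd]; linear_combination hx⟩
  have hD2 : (8:ℤ) ∣ D₂ - 1 := by
    obtain ⟨x, hx⟩ := h8sq t₂ ht2odd
    exact ⟨d * t₂ ^ 2 + x, by
      rw [show D₂ = D₀ * t₂ ^ 2 from rfl, hd]; linear_combination hx⟩
  -- the main congruence
  have hS1 : 3 * (D₁ - 1) + b₁ * (a₁ - c₁ + a₁ ^ 2 * c₁) =
      3 * (D₀ * t₁ ^ 2 - 1) + b * t₁ * (a₁ - t₁ ^ 2 * k₁ + a₁ ^ 2 * (t₁ ^ 2 * k₁)) := by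
    rw [show D₁ = D₀ * t₁ ^ 2 from rfl, show b₁ = b * t₁ from rfl, hc1v]
  have hS2 : 3 * (D₂ - 1) + b₂ * (a₂ - c₂ + a₂ ^ 2 * c₂) =
      3 * (D₀ * t₂ ^ 2 - 1) + b * t₂ * (a₂ - t₂ ^ 2 * k₂ + a₂ ^ 2 * (t₂ ^ 2 * k₂)) := by
    rw [show D₂ = D₀ * t₂ ^ 2 from rfl, show b₂ = b * t₂ from rfl, hc2v]
  have hcong : 3 * (D₁ - 1) + b₁ * (a₁ - c₁ + a₁ ^ 2 * c₁) ≡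
      3 * (D₂ - 1) + b₂ * (a₂ - c₂ + a₂ ^ 2 * c₂) [ZMOD 48] := by
    rw [hS1, hS2]
    exact (key t₁ a₁ k₁ hg1 hat1 hk₁).trans (key t₂ a₂ k₂ hg2 hat2 hk₂).symm
  have hmod : (48:ℤ) ∣ (3 * (D₁ - 1) + b₁ * (a₁ - c₁ + a₁ ^ 2 * c₁)) -
      (3 * (D₂ - 1) + b₂ * (a₂ - c₂ + a₂ ^ 2 * c₂)) := hcong.symm.dvd
  refine ⟨hD1, hD2, hmod, ?_⟩
  -- complex part
  have hζne : ζ ≠ 0 := Complex.exp_ne_zero _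
  have hζ24 : ζ ^ (24:ℤ) = -1 := by
    show Complex.exp _ ^ (24:ℤ) = -1
    rw [← Complex.exp_int_mul,
      show (24:ℤ) * (2 * (Real.pi:ℂ) * Complex.I / 48) = (Real.pi:ℂ) * Complex.I by
        push_cast; ring]
    exact Complex.exp_pi_mul_I
  have hζ48 : ζ ^ (48:ℤ) = 1 := by
    show Complex.exp _ ^ (48:ℤ) = 1
    rw [← Complex.exp_int_mul,
      show (48:ℤ) * (2 * (Real.pi:ℂ) * Complex.I / 48) = 2 * (Real.pi:ℂ) * Complex.I by
        push_cast; ring]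
    exact Complex.exp_two_pi_mul_I
  obtain ⟨q, hq⟩ := hmod
  obtain ⟨s₁, hs₁⟩ := hD1
  obtain ⟨s₂, hs₂⟩ := hD2
  have hdiv1 : (D₁ - 1) / 8 = s₁ := by
    rw [hs₁]; exact Int.mul_ediv_cancel_left _ (by norm_num)
  have hdiv2 : (D₂ - 1) / 8 = s₂ := by
    rw [hs₂]; exact Int.mul_ediv_cancel_left _ (by norm_num)
  rw [hdiv1, hdiv2, show (-1 : ℂ) = ζ ^ (24:ℤ) from hζ24.symm, ← zpow_mul, ← zpow_mul,
    ← zpow_add₀ hζne, ← zpow_add₀ hζne,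
    show 24 * s₁ + b₁ * (a₁ - c₁ + a₁ ^ 2 * c₁) =
      (24 * s₂ + b₂ * (a₂ - c₂ + a₂ ^ 2 * c₂)) + 48 * q by linarith,
    zpow_add₀ hζne, zpow_mul, hζ48, one_zpow, mul_one]
end

section
/- Let a₁, a₂, t₁, t₂ be positive integers with gcd(a₁,a₂) = 1 and t := t₁t₂ > 1, let D₀ < 0 be an integer, and let b, b̃ be integers with 4a_i ∣ b² − D₀ for i = 1,2, b̃ ≡ b (mod 2a₁) and b̃ ≡ −b (mod 2a₂). Set a := a₁a₂ and ã := {x·a + y·(−b̃ + √D₀) : x, y ∈ ℤ} ⊂ ℂ, where √D₀ := i√|D₀|. Then every nonzero α̃ ∈ ã satisfies Nm(α̃) := |α̃|² = (xa − yb̃)² − D₀y² ≥ a; in particular, there is no α̃ ∈ ã with Nm(α̃) = a/t. (The second half of Lemma 2.7 of the paper: when t > 1 there cannot exist α̃ ∈ ã of norm a/t < a.) -/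
/-!
The norm of `x a + y (−b̃ + √D₀)` is the integer `(x a − y b̃)² − D₀ y²`, which is congruent to
`y² (b̃² − D₀)` modulo `a`. Since `b̃ ≡ ±b (mod 2aᵢ)` and `4aᵢ ∣ b² − D₀`, each `aᵢ` divides
`b̃² − D₀`, hence so does `a = a₁a₂`. So every nonzero norm is a positive multiple of `a`, and
cannot equal `a / t < a`.
-/

open Complex

theorem normSq_add_mul_sd {D₀ : ℤ} (hD₀ : D₀ ≤ 0) (u v : ℝ) :
    normSq (u + v * sd D₀) = u ^ 2 - D₀ * v ^ 2 := by
  have hsq : Real.sqrt (D₀.natAbs) ^ 2 = -D₀ := by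
    rw [Real.sq_sqrt (Nat.cast_nonneg _), Nat.cast_natAbs, Int.cast_abs,
      abs_of_nonpos (Int.cast_nonpos.mpr hD₀)]
  have hα : (u : ℂ) + v * sd D₀ = ⟨u, v * Real.sqrt (D₀.natAbs)⟩ := by
    apply Complex.ext <;> simp [sd]
  rw [hα, normSq_mk]
  linear_combination v ^ 2 * hsq

theorem dvd_sq_sub_of_dvd_sub {R : Type*} [CommRing R] {a b c D : R}
    (hb : a ∣ b ^ 2 - D) (hcb : a ∣ c - b) : a ∣ c ^ 2 - D := by
  have : c ^ 2 - D = (c - b) * (c + b) + (b ^ 2 - D) := by ring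
  rw [this]
  exact dvd_add (dvd_mul_of_dvd_left hcb _) hb

theorem dvd_norm_form_of_dvd_sq_sub {R : Type*} [CommRing R] {A c D : R} (hc : A ∣ c ^ 2 - D) (x y : R) :
    A ∣ (x * A - y * c) ^ 2 - D * y ^ 2 := by
  have : (x * A - y * c) ^ 2 - D * y ^ 2 = A * (x ^ 2 * A - 2 * x * y * c) + y ^ 2 * (c ^ 2 - D) := by
    ring
  rw [this]
  exact dvd_add (dvd_mul_right _ _) (dvd_mul_of_dvd_right hc _)

theorem le_normSq_of_dvd_sq_sub {D₀ c : ℤ} {A : ℕ} (hD₀ : D₀ ≤ 0) (hc : (A : ℤ) ∣ c ^ 2 - D₀)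
    (x y : ℤ) (hα : (x : ℂ) * A + y * (-(c : ℂ) + sd D₀) ≠ 0) :
    (A : ℝ) ≤ normSq ((x : ℂ) * A + y * (-(c : ℂ) + sd D₀)) := by
  have hnorm : normSq ((x : ℂ) * A + y * (-(c : ℂ) + sd D₀)) =
      (((x * A - y * c) ^ 2 - D₀ * y ^ 2 : ℤ) : ℝ) := by
    have : (x : ℂ) * A + y * (-(c : ℂ) + sd D₀) =
        ((x * A - y * c : ℤ) : ℝ) + (y : ℝ) * sd D₀ := by push_cast; ring
    rw [this, normSq_add_mul_sd hD₀]
    push_cast; ring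
  have hpos := normSq_pos.mpr hα
  rw [hnorm] at hpos ⊢
  exact_mod_cast Int.le_of_dvd (Int.cast_pos.mp hpos) (dvd_norm_form_of_dvd_sq_sub hc x y)

theorem stmt_12_general (D₀ : ℤ) (hneg : D₀ < 0)
    (a₁ a₂ t₁ t₂ : ℕ) (ha₁ : 0 < a₁) (ha₂ : 0 < a₂)
    (hcoa : Nat.Coprime a₁ a₂) (ht : 1 < t₁ * t₂)
    (b btil : ℤ)
    (hb1 : (4 * (a₁ : ℤ)) ∣ b ^ 2 - D₀) (hb2 : (4 * (a₂ : ℤ)) ∣ b ^ 2 - D₀)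
    (hbt1 : (2 * (a₁ : ℤ)) ∣ btil - b) (hbt2 : (2 * (a₂ : ℤ)) ∣ btil + b) :
    (∀ α : ℂ, (∃ x y : ℤ, α = (x : ℂ) * ((a₁ * a₂ : ℕ) : ℂ) + (y : ℂ) * (-(btil : ℂ) + sd D₀)) →
      α ≠ 0 → ((a₁ * a₂ : ℕ) : ℝ) ≤ Complex.normSq α) ∧
    ¬∃ α : ℂ, (∃ x y : ℤ, α = (x : ℂ) * ((a₁ * a₂ : ℕ) : ℂ) + (y : ℂ) * (-(btil : ℂ) + sd D₀)) ∧
      Complex.normSq α = ((a₁ * a₂ : ℕ) : ℝ) / ((t₁ * t₂ : ℕ) : ℝ) := by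
  have h₁ : (a₁ : ℤ) ∣ btil ^ 2 - D₀ :=
    dvd_sq_sub_of_dvd_sub (dvd_trans (Dvd.intro_left 4 rfl) hb1)
      (dvd_trans (Dvd.intro_left 2 rfl) hbt1)
  have h₂ : (a₂ : ℤ) ∣ btil ^ 2 - D₀ :=
    dvd_sq_sub_of_dvd_sub (b := -b) (by simpa using dvd_trans (Dvd.intro_left 4 rfl) hb2)
      (by simpa using dvd_trans (Dvd.intro_left 2 rfl) hbt2)
  have ha : ((a₁ * a₂ : ℕ) : ℤ) ∣ btil ^ 2 - D₀ := by
    push_cast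
    exact (Nat.isCoprime_iff_coprime.mpr hcoa).mul_dvd h₁ h₂
  have hge : ∀ α : ℂ, (∃ x y : ℤ, α = (x : ℂ) * ((a₁ * a₂ : ℕ) : ℂ) + (y : ℂ) * (-(btil : ℂ) + sd D₀)) →
      α ≠ 0 → ((a₁ * a₂ : ℕ) : ℝ) ≤ normSq α := by
    rintro α ⟨x, y, rfl⟩ hα
    exact le_normSq_of_dvd_sq_sub hneg.le ha x y hα
  refine ⟨hge, ?_⟩
  rintro ⟨α, hmem, hnorm⟩
  have ha_pos : (0 : ℝ) < (a₁ * a₂ : ℕ) := by positivity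
  have ht_gt : (1 : ℝ) < (t₁ * t₂ : ℕ) := by exact_mod_cast ht
  have hα : α ≠ 0 := by
    rintro rfl
    rw [normSq_zero, eq_comm, div_eq_zero_iff] at hnorm
    rcases hnorm with h | h <;> linarith
  have := hge α hmem hα
  rw [hnorm, le_div_iff₀ (by linarith)] at this
  nlinarith

/-- The second half of Lemma 2.7 of the paper: for `t = t₁t₂ > 1`, every nonzero element
`α̃ ∈ ã = ℤa + ℤ(−b̃+√D₀)` has norm `≥ a`; in particular there is no element of norm `a/t`. -/
theorem stmt_12 (D₀ : ℤ) (hneg : D₀ < 0)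
    (a₁ a₂ t₁ t₂ : ℕ) (ha₁ : 0 < a₁) (ha₂ : 0 < a₂) (ht₁ : 0 < t₁) (ht₂ : 0 < t₂)
    (hcoa : Nat.Coprime a₁ a₂) (ht : 1 < t₁ * t₂)
    (b btil : ℤ)
    (hb1 : (4 * (a₁ : ℤ)) ∣ b ^ 2 - D₀) (hb2 : (4 * (a₂ : ℤ)) ∣ b ^ 2 - D₀)
    (hbt1 : (2 * (a₁ : ℤ)) ∣ btil - b) (hbt2 : (2 * (a₂ : ℤ)) ∣ btil + b) :
    (∀ α : ℂ, (∃ x y : ℤ, α = (x : ℂ) * ((a₁ * a₂ : ℕ) : ℂ) + (y : ℂ) * (-(btil : ℂ) + sd D₀)) →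
      α ≠ 0 → ((a₁ * a₂ : ℕ) : ℝ) ≤ Complex.normSq α) ∧
    ¬∃ α : ℂ, (∃ x y : ℤ, α = (x : ℂ) * ((a₁ * a₂ : ℕ) : ℂ) + (y : ℂ) * (-(btil : ℂ) + sd D₀)) ∧
      Complex.normSq α = ((a₁ * a₂ : ℕ) : ℝ) / ((t₁ * t₂ : ℕ) : ℝ) :=
  stmt_12_general D₀ hneg a₁ a₂ t₁ t₂ ha₁ ha₂ hcoa ht b btil hb1 hb2 hbt1 hbt2
end

section
/- Assume the small CM setup with the Lemma 2.4 conditions, and let ℤ₂ denote the 2-adic integers and 𝔽₂ = ℤ₂/2ℤ₂. Let δ₀ ∈ ℤ₂ satisfy δ₀² = D₀ and (b+δ₀)/2 ∈ ℤ₂ˣ (such δ₀ exists since D₀ ≡ 1 mod 8 and b is odd), and set 𝓏_i := t_i·a_i⁻¹·(b+δ₀)/2 and 𝓏̄_i := t_i·a_i⁻¹·(b−δ₀)/2 in ℤ₂ (the a_i are odd, hence invertible in ℤ₂). Let P₂ := −(a/(t·δ₀)) · [[1, −𝓏̄₁, 𝓏₂, −𝓏̄₁𝓏₂],[−1, 𝓏₁,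 −𝓏̄₂, 𝓏₁𝓏̄₂],[−1, 𝓏̄₁, −𝓏̄₂, 𝓏̄₁𝓏̄₂],[1, −𝓏₁, 𝓏₂, −𝓏₁𝓏₂]], a 4×4 matrix over ℤ₂. Then: (i) 𝓏_i ∈ 1 + 2ℤ₂ and 𝓏̄_i ∈ 2ℤ₂; (ii) det P₂ ∈ ℤ₂ˣ and the entrywise reduction of P₂ modulo 2 equals [[1,0,1,0],[1,1,0,0],[1,0,0,0],[1,1,1,1]] over 𝔽₂; (iii) for every positive integer d and every μ = (μ₁,μ₂,μ₃,μ₄) ∈ ℚ₂⁴, writing y := P₂·μ, one has d·(μ₃μ₂ − μ₁μ₄) = (d·t/a)·(y₁y₂ − y₃y₄); (iv) P₂·M_{(0,0,0,1)^⊥} = M_{𝕍₄} and P₂·M_{span{(1,0,0,0)}} = M_{𝕍₄^⊥}, where for a linear subspace 𝕍 ⊂ 𝔽₂⁴, M_𝕍 := {x ∈ ℤ₂⁴ : (x mod 2) ∈ 𝕍}, 𝕍₄ := {α ∈ 𝔽₂⁴ : α₁+α₂+α₃+α₄ = 0} = (1,1,1,1)^⊥, and 𝕍₄^⊥ := 𝔽₂·(1,1,1,1).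 (Proposition 5.10 (prop:PNL2) of the paper, describing the 2-adic lattice chain 𝒫⊕𝒩 ⊂ L_d ⊂ L_d' under the isometry (5.x).) -/
open Matrix

/-- For a linear subspace (or subset) `𝕍 ⊂ 𝔽₂⁴`, the lattice
`M_𝕍 = {x ∈ ℤ₂⁴ : x mod 2 ∈ 𝕍}`. -/
def Mset (V : Set (Fin 4 → ZMod 2)) : Set (Fin 4 → ℤ_[2]) :=
  {x | (fun i => PadicInt.toZMod (x i)) ∈ V}

/-- The orthogonal complement `v^⊥ ⊂ 𝔽₂⁴` with respect to the dot product. -/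
def perpSet (v : Fin 4 → ZMod 2) : Set (Fin 4 → ZMod 2) :=
  {α | α ⬝ᵥ v = 0}

/-- The line `𝔽₂·v ⊂ 𝔽₂⁴`. -/
def lineSet (v : Fin 4 → ZMod 2) : Set (Fin 4 → ZMod 2) :=
  Set.range fun c : ZMod 2 => c • v

lemma tz_zero_iff (x : ℤ_[2]) : PadicInt.toZMod x = 0 ↔ (2 : ℤ_[2]) ∣ x := by
  have h : x ∈ RingHom.ker (PadicInt.toZMod : ℤ_[2] →+* ZMod 2) ↔ (2 : ℤ_[2]) ∣ x := by
    rw [PadicInt.ker_toZMod, PadicInt.maximalIdeal_eq_span_p, Ideal.mem_span_singleton]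
    norm_num
  simpa [RingHom.mem_ker] using h

lemma tz_unit_iff (x : ℤ_[2]) : IsUnit x ↔ PadicInt.toZMod x ≠ 0 := by
  have h2 : ((2 : ℕ) : ℤ_[2]) = (2 : ℤ_[2]) := by norm_num
  rw [Ne, tz_zero_iff, ← h2, ← PadicInt.norm_lt_one_iff_dvd, PadicInt.isUnit_iff]
  have h1 := PadicInt.norm_le_one x
  constructor
  · intro h; rw [h]; norm_num
  · intro h
    rcases lt_or_eq_of_le h1 with h' | h'
    · exact absurd h' h
    · exact h'

lemma zmod2_ne_zero : ∀ x : ZMod 2, x ≠ 0 → x = 1 := by decide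

lemma zmod2_sq : ∀ x : ZMod 2, x ^ 2 = 1 → x = 1 := by decide

lemma rint (n : ℤ) (h : n % 2 = 1) : PadicInt.toZMod ((n : ℤ_[2])) = 1 := by
  obtain ⟨k, hk⟩ : ∃ k, n = 2 * k + 1 := ⟨n / 2, by omega⟩
  subst hk
  have : ((2 * k + 1 : ℤ) : ℤ_[2]) = 2 * (k : ℤ_[2]) + 1 := by push_cast; ring
  rw [this, map_add, _root_.map_mul, map_intCast, _root_.map_one,
    show (2 : ℤ_[2]) = ((2:ℕ) : ℤ_[2]) by norm_num, map_natCast,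
    show ((2:ℕ) : ZMod 2) = 0 by decide]
  ring

lemma rnat (n : ℕ) (h : n % 2 = 1) : PadicInt.toZMod ((n : ℤ_[2])) = 1 := by
  have := rint (n : ℤ) (by omega)
  rw [Int.cast_natCast] at this
  exact this

lemma r2zero : PadicInt.toZMod (2 : ℤ_[2]) = 0 := by
  rw [show (2 : ℤ_[2]) = ((2:ℕ) : ℤ_[2]) by norm_num, map_natCast]
  decide

set_option maxHeartbeats 2000000 in
/-- Proposition 5.10 (prop:PNL2) of the paper, describing the 2-adic matrix `P₂` and the
lattice chain `𝒫⊕𝒩 ⊂ L_d ⊂ L_d'` under the isometry it induces. -/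
theorem stmt_13 (D₀ : ℤ) (hneg : D₀ < 0) (h8 : D₀ % 8 = 1) (h3 : ¬(3 : ℤ) ∣ D₀)
    (t₁ t₂ a₁ a₂ : ℕ) (ht₁ : 0 < t₁) (ht₂ : 0 < t₂) (ha₁ : 0 < a₁) (ha₂ : 0 < a₂)
    (hcot : Nat.Coprime t₁ t₂) (hcoa : Nat.Coprime a₁ a₂)
    (b : ℤ)
    (hg1 : Int.gcd (a₁ : ℤ) (6 * b * (D₀ * ((t₁ * t₂ : ℕ) : ℤ) ^ 2)) = 1)
    (hg2 : Int.gcd (a₂ : ℤ) (6 * b * (D₀ * ((t₁ * t₂ : ℕ) : ℤ) ^ 2)) = 1)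
    (hb1 : (4 * (a₁ : ℤ)) ∣ b ^ 2 - D₀) (hb2 : (4 * (a₂ : ℤ)) ∣ b ^ 2 - D₀)
    (h48a : 48 ∣ Int.gcd ((a₁ : ℤ) - (t₁ : ℤ)) (b - 1))
    (h48b : 48 ∣ Int.gcd ((a₂ : ℤ) - (t₂ : ℤ)) (b - 1))
    -- `δ₀ ∈ ℤ₂` with `δ₀² = D₀` and `(b+δ₀)/2 ∈ ℤ₂ˣ`
    (δ₀ : ℤ_[2]) (hδsq : δ₀ ^ 2 = (D₀ : ℤ_[2]))
    (hδu : ∃ e : ℤ_[2], 2 * e = (b : ℤ_[2]) + δ₀ ∧ IsUnit e)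
    -- `𝓏ᵢ = tᵢaᵢ⁻¹(b+δ₀)/2` and `𝓏̄ᵢ = tᵢaᵢ⁻¹(b−δ₀)/2` in `ℤ₂`
    (zz₁ zz₂ zb₁ zb₂ : ℤ_[2])
    (hzz₁ : 2 * (a₁ : ℤ_[2]) * zz₁ = (t₁ : ℤ_[2]) * ((b : ℤ_[2]) + δ₀))
    (hzz₂ : 2 * (a₂ : ℤ_[2]) * zz₂ = (t₂ : ℤ_[2]) * ((b : ℤ_[2]) + δ₀))
    (hzb₁ : 2 * (a₁ : ℤ_[2]) * zb₁ = (t₁ : ℤ_[2]) * ((b : ℤ_[2]) - δ₀))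
    (hzb₂ : 2 * (a₂ : ℤ_[2]) * zb₂ = (t₂ : ℤ_[2]) * ((b : ℤ_[2]) - δ₀))
    -- the scalar `−a/(tδ₀)`
    (c : ℤ_[2]) (hc : c * ((t₁ * t₂ : ℕ) : ℤ_[2]) * δ₀ = -((a₁ * a₂ : ℕ) : ℤ_[2]))
    (P₂ : Matrix (Fin 4) (Fin 4) ℤ_[2])
    (hP : P₂ = c • !![1, -zb₁, zz₂, -zb₁ * zz₂;
                      -1, zz₁, -zb₂, zz₁ * zb₂;
                      -1, zb₁, -zb₂, zb₁ * zb₂;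
                      1, -zz₁, zz₂, -zz₁ * zz₂]) :
    -- (i) `𝓏ᵢ ∈ 1 + 2ℤ₂` and `𝓏̄ᵢ ∈ 2ℤ₂`
    ((∃ u : ℤ_[2], zz₁ = 1 + 2 * u) ∧ (∃ u : ℤ_[2], zz₂ = 1 + 2 * u) ∧
      (∃ u : ℤ_[2], zb₁ = 2 * u) ∧ (∃ u : ℤ_[2], zb₂ = 2 * u)) ∧
    -- (ii) `det P₂ ∈ ℤ₂ˣ` and the reduction of `P₂` modulo 2
    (IsUnit P₂.det ∧
      P₂.map (fun x => PadicInt.toZMod x) =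
        !![1, 0, 1, 0; 1, 1, 0, 0; 1, 0, 0, 0; 1, 1, 1, 1]) ∧
    -- (iii) `P₂` intertwines the quadratic forms, for every positive integer d
    (∀ dd : ℕ, 0 < dd → ∀ μ : Fin 4 → ℚ_[2],
      (dd : ℚ_[2]) * (μ 2 * μ 1 - μ 0 * μ 3) =
        ((dd : ℚ_[2]) * ((t₁ * t₂ : ℕ) : ℚ_[2]) / ((a₁ * a₂ : ℕ) : ℚ_[2])) *
          (((P₂.map (fun x : ℤ_[2] => (x : ℚ_[2]))).mulVec μ 0) *
             ((P₂.map (fun x : ℤ_[2] => (x : ℚ_[2]))).mulVec μ 1) -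
           ((P₂.map (fun x : ℤ_[2] => (x : ℚ_[2]))).mulVec μ 2) *
             ((P₂.map (fun x : ℤ_[2] => (x : ℚ_[2]))).mulVec μ 3))) ∧
    -- (iv) the lattice identifications
    ((fun x => P₂.mulVec x) '' Mset (perpSet ![0, 0, 0, 1]) =
        Mset (perpSet ![1, 1, 1, 1]) ∧
      (fun x => P₂.mulVec x) '' Mset (lineSet ![1, 0, 0, 0]) =
        Mset (lineSet ![1, 1, 1, 1])) := by
  obtain ⟨e, he, heu⟩ := hδu
  -- parities
  have e2a1 : ¬ (2:ℤ) ∣ (a₁:ℤ) := by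
    intro h
    have h2 : (2:ℤ) ∣ (Int.gcd (a₁:ℤ) (6 * b * (D₀ * ((t₁ * t₂ : ℕ) : ℤ) ^ 2)) : ℤ) :=
      Int.dvd_coe_gcd h ⟨3 * b * (D₀ * ((t₁ * t₂ : ℕ) : ℤ) ^ 2), by ring⟩
    rw [hg1] at h2; norm_num at h2
  have e2a2 : ¬ (2:ℤ) ∣ (a₂:ℤ) := by
    intro h
    have h2 : (2:ℤ) ∣ (Int.gcd (a₂:ℤ) (6 * b * (D₀ * ((t₁ * t₂ : ℕ) : ℤ) ^ 2)) : ℤ) :=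
      Int.dvd_coe_gcd h ⟨3 * b * (D₀ * ((t₁ * t₂ : ℕ) : ℤ) ^ 2), by ring⟩
    rw [hg2] at h2; norm_num at h2
  have d48a : (48:ℤ) ∣ (a₁:ℤ) - (t₁:ℤ) :=
    dvd_trans (Int.natCast_dvd_natCast.mpr h48a) (Int.gcd_dvd_left _ _)
  have d48b : (48:ℤ) ∣ (a₂:ℤ) - (t₂:ℤ) :=
    dvd_trans (Int.natCast_dvd_natCast.mpr h48b) (Int.gcd_dvd_left _ _)
  have db1 : (48:ℤ) ∣ b - 1 :=
    dvd_trans (Int.natCast_dvd_natCast.mpr h48a) (Int.gcd_dvd_right _ _)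
  have pa₁ : a₁ % 2 = 1 := by omega
  have pa₂ : a₂ % 2 = 1 := by omega
  have pt₁ : t₁ % 2 = 1 := by omega
  have pt₂ : t₂ % 2 = 1 := by omega
  have pb : b % 2 = 1 := by omega
  -- mod 2 values
  have ra₁ : PadicInt.toZMod ((a₁ : ℤ_[2])) = 1 := rnat a₁ pa₁
  have ra₂ : PadicInt.toZMod ((a₂ : ℤ_[2])) = 1 := rnat a₂ pa₂
  have rt₁ : PadicInt.toZMod ((t₁ : ℤ_[2])) = 1 := rnat t₁ pt₁
  have rt₂ : PadicInt.toZMod ((t₂ : ℤ_[2])) = 1 := rnat t₂ pt₂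
  have rδ : PadicInt.toZMod δ₀ = 1 := by
    refine zmod2_sq _ ?_
    rw [← map_pow, hδsq]
    exact rint D₀ (by omega)
  have re : PadicInt.toZMod e = 1 := zmod2_ne_zero _ ((tz_unit_iff e).mp heu)
  have two0 : (2 : ℤ_[2]) ≠ 0 := by
    rw [show (2 : ℤ_[2]) = ((2:ℕ) : ℤ_[2]) by norm_num]
    exact Nat.cast_ne_zero.mpr (by norm_num)
  -- zz values
  have key1 : (a₁ : ℤ_[2]) * zz₁ = (t₁ : ℤ_[2]) * e :=
    mul_left_cancel₀ two0 (by linear_combination hzz₁ - (t₁ : ℤ_[2]) * he)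
  have key2 : (a₂ : ℤ_[2]) * zz₂ = (t₂ : ℤ_[2]) * e :=
    mul_left_cancel₀ two0 (by linear_combination hzz₂ - (t₂ : ℤ_[2]) * he)
  have rzz₁ : PadicInt.toZMod zz₁ = 1 := by
    have h := congrArg PadicInt.toZMod key1
    rwa [_root_.map_mul, _root_.map_mul, ra₁, rt₁, re, one_mul, one_mul] at h
  have rzz₂ : PadicInt.toZMod zz₂ = 1 := by
    have h := congrArg PadicInt.toZMod key2
    rwa [_root_.map_mul, _root_.map_mul, ra₂, rt₂, re, one_mul, one_mul] at h
  -- zb values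
  have h8dvd : (8:ℤ) ∣ b ^ 2 - D₀ := by
    obtain ⟨k, hk⟩ : ∃ k, b = 2 * k + 1 := ⟨b / 2, by omega⟩
    obtain ⟨q, hq⟩ : ∃ q, D₀ = 8 * q + 1 := ⟨D₀ / 8, by omega⟩
    obtain ⟨m, hm⟩ : Even (k * (k + 1)) := Int.even_mul_succ_self k
    exact ⟨m - q, by subst hk hq; linear_combination 4 * hm⟩
  obtain ⟨K, hK⟩ := h8dvd
  have hbd2 : ((b : ℤ_[2])) ^ 2 - ((D₀ : ℤ) : ℤ_[2]) = 8 * (K : ℤ_[2]) := by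
    exact_mod_cast congrArg (Int.cast : ℤ → ℤ_[2]) hK
  have hbe : ((b : ℤ_[2]) - δ₀) * e = 4 * (K : ℤ_[2]) :=
    mul_left_cancel₀ two0 (by linear_combination ((b : ℤ_[2]) - δ₀) * he - hδsq + hbd2)
  have keyb1 : (a₁ : ℤ_[2]) * (zb₁ * e) = 2 * ((t₁ : ℤ_[2]) * (K : ℤ_[2])) :=
    mul_left_cancel₀ two0 (by linear_combination e * hzb₁ + (t₁ : ℤ_[2]) * hbe)
  have keyb2 : (a₂ : ℤ_[2]) * (zb₂ * e) = 2 * ((t₂ : ℤ_[2]) * (K : ℤ_[2])) :=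
    mul_left_cancel₀ two0 (by linear_combination e * hzb₂ + (t₂ : ℤ_[2]) * hbe)
  have rzb₁ : PadicInt.toZMod zb₁ = 0 := by
    have h := congrArg PadicInt.toZMod keyb1
    rwa [_root_.map_mul, _root_.map_mul, _root_.map_mul, ra₁, re, one_mul, mul_one,
      r2zero, zero_mul] at h
  have rzb₂ : PadicInt.toZMod zb₂ = 0 := by
    have h := congrArg PadicInt.toZMod keyb2
    rwa [_root_.map_mul, _root_.map_mul, _root_.map_mul, ra₂, re, one_mul, mul_one,
      r2zero, zero_mul] at h
  -- c value
  have rc : PadicInt.toZMod c = 1 := by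
    have h := congrArg PadicInt.toZMod hc
    rw [_root_.map_mul, _root_.map_mul, map_neg, rδ,
      rnat (t₁ * t₂) (by rw [Nat.mul_mod, pt₁, pt₂]),
      rnat (a₁ * a₂) (by rw [Nat.mul_mod, pa₁, pa₂]), mul_one, mul_one] at h
    rw [h]; decide
  -- part (i)
  have part1 : ((∃ u : ℤ_[2], zz₁ = 1 + 2 * u) ∧ (∃ u : ℤ_[2], zz₂ = 1 + 2 * u) ∧
      (∃ u : ℤ_[2], zb₁ = 2 * u) ∧ (∃ u : ℤ_[2], zb₂ = 2 * u)) := by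
    refine ⟨?_, ?_, ?_, ?_⟩
    · obtain ⟨u, hu⟩ := (tz_zero_iff (zz₁ - 1)).mp (by rw [map_sub, rzz₁, _root_.map_one, sub_self])
      exact ⟨u, by linear_combination hu⟩
    · obtain ⟨u, hu⟩ := (tz_zero_iff (zz₂ - 1)).mp (by rw [map_sub, rzz₂, _root_.map_one, sub_self])
      exact ⟨u, by linear_combination hu⟩
    · exact (tz_zero_iff zb₁).mp rzb₁
    · exact (tz_zero_iff zb₂).mp rzb₂
  -- part (ii) reduction
  have hred : P₂.map (fun x => PadicInt.toZMod x) =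
      !![1, 0, 1, 0; 1, 1, 0, 0; 1, 0, 0, 0; 1, 1, 1, 1] := by
    subst hP
    ext i j
    fin_cases i <;> fin_cases j <;>
      simp [Matrix.map_apply, Matrix.smul_apply, smul_eq_mul, _root_.map_mul, map_neg,
        _root_.map_one, rc, rzz₁, rzz₂, rzb₁, rzb₂]
    all_goals decide
  have hdet : IsUnit P₂.det := by
    rw [tz_unit_iff]
    rw [show PadicInt.toZMod P₂.det = (P₂.map (fun x => PadicInt.toZMod x)).det from
      RingHom.map_det PadicInt.toZMod P₂, hred]
    decide
  refine ⟨part1, ⟨hdet, hred⟩, ?_, ?_⟩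
  · intro dd hdd μ
    have Hzz₁ : 2 * (a₁ : ℚ_[2]) * (zz₁ : ℚ_[2]) = (t₁ : ℚ_[2]) * ((b : ℚ_[2]) + (δ₀ : ℚ_[2])) := by
      exact_mod_cast congrArg (fun x : ℤ_[2] => (x : ℚ_[2])) hzz₁
    have Hzz₂ : 2 * (a₂ : ℚ_[2]) * (zz₂ : ℚ_[2]) = (t₂ : ℚ_[2]) * ((b : ℚ_[2]) + (δ₀ : ℚ_[2])) := by
      exact_mod_cast congrArg (fun x : ℤ_[2] => (x : ℚ_[2])) hzz₂
    have Hzb₁ : 2 * (a₁ : ℚ_[2]) * (zb₁ : ℚ_[2]) = (t₁ : ℚ_[2]) * ((b : ℚ_[2]) - (δ₀ : ℚ_[2])) := by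
      exact_mod_cast congrArg (fun x : ℤ_[2] => (x : ℚ_[2])) hzb₁
    have Hzb₂ : 2 * (a₂ : ℚ_[2]) * (zb₂ : ℚ_[2]) = (t₂ : ℚ_[2]) * ((b : ℚ_[2]) - (δ₀ : ℚ_[2])) := by
      exact_mod_cast congrArg (fun x : ℤ_[2] => (x : ℚ_[2])) hzb₂
    have Hc : (c : ℚ_[2]) * ((t₁ : ℚ_[2]) * (t₂ : ℚ_[2])) * (δ₀ : ℚ_[2])
        = -((a₁ : ℚ_[2]) * (a₂ : ℚ_[2])) := by
      have := congrArg (fun x : ℤ_[2] => (x : ℚ_[2])) hc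
      push_cast at this
      exact_mod_cast this
    have ha₁0 : (a₁ : ℚ_[2]) ≠ 0 := Nat.cast_ne_zero.mpr ha₁.ne'
    have ha₂0 : (a₂ : ℚ_[2]) ≠ 0 := Nat.cast_ne_zero.mpr ha₂.ne'
    have ht₁0 : (t₁ : ℚ_[2]) ≠ 0 := Nat.cast_ne_zero.mpr ht₁.ne'
    have ht₂0 : (t₂ : ℚ_[2]) ≠ 0 := Nat.cast_ne_zero.mpr ht₂.ne'
    have h20 : (2 : ℚ_[2]) ≠ 0 := by
      rw [show (2 : ℚ_[2]) = ((2:ℕ) : ℚ_[2]) by norm_num]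
      exact Nat.cast_ne_zero.mpr (by norm_num)
    have hδ0 : (δ₀ : ℚ_[2]) ≠ 0 := by
      intro h0
      have hsq : ((δ₀ : ℚ_[2]))^2 = ((D₀ : ℤ) : ℚ_[2]) := by
        exact_mod_cast congrArg (fun x : ℤ_[2] => (x : ℚ_[2])) hδsq
      rw [h0] at hsq
      have : ((D₀ : ℤ) : ℚ_[2]) = 0 := by rw [← hsq]; ring
      exact absurd (Int.cast_eq_zero.mp this) (by omega)
    have ezz₁ : (zz₁ : ℚ_[2]) = (t₁ : ℚ_[2]) * ((b : ℚ_[2]) + (δ₀ : ℚ_[2])) / (2 * (a₁ : ℚ_[2])) := by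
      rw [eq_div_iff (mul_ne_zero h20 ha₁0)]; linear_combination Hzz₁
    have ezz₂ : (zz₂ : ℚ_[2]) = (t₂ : ℚ_[2]) * ((b : ℚ_[2]) + (δ₀ : ℚ_[2])) / (2 * (a₂ : ℚ_[2])) := by
      rw [eq_div_iff (mul_ne_zero h20 ha₂0)]; linear_combination Hzz₂
    have ezb₁ : (zb₁ : ℚ_[2]) = (t₁ : ℚ_[2]) * ((b : ℚ_[2]) - (δ₀ : ℚ_[2])) / (2 * (a₁ : ℚ_[2])) := by
      rw [eq_div_iff (mul_ne_zero h20 ha₁0)]; linear_combination Hzb₁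
    have ezb₂ : (zb₂ : ℚ_[2]) = (t₂ : ℚ_[2]) * ((b : ℚ_[2]) - (δ₀ : ℚ_[2])) / (2 * (a₂ : ℚ_[2])) := by
      rw [eq_div_iff (mul_ne_zero h20 ha₂0)]; linear_combination Hzb₂
    have ec : (c : ℚ_[2]) = -((a₁ : ℚ_[2]) * (a₂ : ℚ_[2]))
        / ((t₁ : ℚ_[2]) * (t₂ : ℚ_[2]) * (δ₀ : ℚ_[2])) := by
      rw [eq_div_iff (mul_ne_zero (mul_ne_zero ht₁0 ht₂0) hδ0)]; linear_combination Hc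
    rw [div_mul_eq_mul_div, eq_div_iff (show ((a₁*a₂:ℕ):ℚ_[2]) ≠ 0 from
      Nat.cast_ne_zero.mpr (Nat.mul_ne_zero ha₁.ne' ha₂.ne'))]
    rw [hP]
    simp only [Matrix.map_apply, Matrix.smul_apply, Matrix.mulVec, dotProduct,
      Fin.sum_univ_four, smul_eq_mul, Matrix.cons_val', Matrix.cons_val_zero,
      Matrix.cons_val_one, Matrix.head_cons, Matrix.empty_val', Matrix.cons_val_fin_one,
      Matrix.head_fin_const, Matrix.cons_val_two, Matrix.cons_val_three, Matrix.tail_cons,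
      Matrix.of_apply]
    push_cast
    have hu₁ : (a₁ : ℚ_[2]) * ((zz₁ : ℚ_[2]) - (zb₁ : ℚ_[2])) = (t₁ : ℚ_[2]) * (δ₀ : ℚ_[2]) := by
      linear_combination (Hzz₁ - Hzb₁) / 2
    have hu₂ : (a₂ : ℚ_[2]) * ((zz₂ : ℚ_[2]) - (zb₂ : ℚ_[2])) = (t₂ : ℚ_[2]) * (δ₀ : ℚ_[2]) := by
      linear_combination (Hzz₂ - Hzb₂) / 2
    apply mul_left_cancel₀ ha₁0
    apply mul_left_cancel₀ ha₂0
    linear_combination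
      (-((dd : ℚ_[2]) * (t₁ : ℚ_[2]) * (t₂ : ℚ_[2]) * (c : ℚ_[2])^2 *
          (μ 2 * μ 1 - μ 0 * μ 3) * ((a₂ : ℚ_[2]) * ((zz₂ : ℚ_[2]) - (zb₂ : ℚ_[2]))))) * hu₁ +
      (-((dd : ℚ_[2]) * (t₁ : ℚ_[2]) * (t₂ : ℚ_[2]) * (c : ℚ_[2])^2 *
          (μ 2 * μ 1 - μ 0 * μ 3) * ((t₁ : ℚ_[2]) * (δ₀ : ℚ_[2])))) * hu₂ +
      ((dd : ℚ_[2]) * (μ 2 * μ 1 - μ 0 * μ 3) *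
          ((a₁ : ℚ_[2]) * (a₂ : ℚ_[2]) - (c : ℚ_[2]) * (t₁ : ℚ_[2]) * (t₂ : ℚ_[2]) * (δ₀ : ℚ_[2]))) * Hc
  · -- part (iv)
    set Q : Matrix (Fin 4) (Fin 4) (ZMod 2) := !![1, 0, 1, 0; 1, 1, 0, 0; 1, 0, 0, 0; 1, 1, 1, 1]
      with hQ
    have hmv : ∀ (x : Fin 4 → ℤ_[2]) (i : Fin 4),
        PadicInt.toZMod (P₂.mulVec x i) = Q.mulVec (fun j => PadicInt.toZMod (x j)) i := by
      intro x i
      rw [RingHom.map_mulVec PadicInt.toZMod P₂ x i]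
      rw [show P₂.map (⇑PadicInt.toZMod) = Q from hred]
      rfl
    have hmul : P₂ * P₂⁻¹ = 1 := Matrix.mul_nonsing_inv P₂ hdet
    have hsurj : ∀ y : Fin 4 → ℤ_[2], P₂.mulVec (P₂⁻¹.mulVec y) = y := by
      intro y
      rw [Matrix.mulVec_mulVec, hmul, Matrix.one_mulVec]
    constructor
    · ext y
      simp only [Set.mem_image, Mset, perpSet, Set.mem_setOf_eq]
      constructor
      · rintro ⟨x, hx, rfl⟩
        have hfun : (fun i => PadicInt.toZMod (P₂.mulVec x i))
            = Q.mulVec (fun j => PadicInt.toZMod (x j)) := funext (hmv x)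
        rw [hfun]
        exact (by decide : ∀ v : Fin 4 → ZMod 2,
          v ⬝ᵥ ![0, 0, 0, 1] = 0 → Q.mulVec v ⬝ᵥ ![1, 1, 1, 1] = 0) _ hx
      · intro hy
        refine ⟨P₂⁻¹.mulVec y, ?_, hsurj y⟩
        have hQx : Q.mulVec (fun j => PadicInt.toZMod (P₂⁻¹.mulVec y j))
            = fun i => PadicInt.toZMod (y i) := by
          funext i
          rw [← hmv (P₂⁻¹.mulVec y) i, hsurj y]
        refine (by decide : ∀ v : Fin 4 → ZMod 2,
          Q.mulVec v ⬝ᵥ ![1, 1, 1, 1] = 0 → v ⬝ᵥ ![0, 0, 0, 1] = 0) _ ?_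
        rw [hQx]
        exact hy
    · ext y
      simp only [Set.mem_image, Mset, lineSet, Set.mem_setOf_eq, Set.mem_range]
      constructor
      · rintro ⟨x, hx, rfl⟩
        have hfun : (fun i => PadicInt.toZMod (P₂.mulVec x i))
            = Q.mulVec (fun j => PadicInt.toZMod (x j)) := funext (hmv x)
        rw [hfun]
        exact (by decide : ∀ v : Fin 4 → ZMod 2,
          (∃ cc : ZMod 2, cc • ![1, 0, 0, 0] = v) →
            ∃ cc : ZMod 2, cc • ![1, 1, 1, 1] = Q.mulVec v) _ hx
      · intro hy
        refine ⟨P₂⁻¹.mulVec y, ?_, hsurj y⟩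
        have hQx : Q.mulVec (fun j => PadicInt.toZMod (P₂⁻¹.mulVec y j))
            = fun i => PadicInt.toZMod (y i) := by
          funext i
          rw [← hmv (P₂⁻¹.mulVec y) i, hsurj y]
        refine (by decide : ∀ v : Fin 4 → ZMod 2,
          (∃ cc : ZMod 2, cc • ![1, 1, 1, 1] = Q.mulVec v) →
            ∃ cc : ZMod 2, cc • ![1, 0, 0, 0] = v) _ ?_
        rw [hQx]
        exact hy
end
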